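/- arXiv:2002.10920 — 3 statements merged into one kernel-verified Lean document; each statement's English description precedes it below -/
import Mathlib

section
/- Let s ≥ 2 and 1 ≤ d ≤ s. For any nonzero square-free polynomial g of degree d in F_q[t_1,...,t_s], the number of zeroes of g in the affine torus T = (F_q^*)^s is at most (q-1)^s - (q-2)^d (q-1)^{s-d}. -/
/-!
It suffices to show that `g` is nonzero on at least `(q - 2) ^ d * (q - 1) ^ (s - d)` points of
the torus. Induct on the number of variables: being square-free, `g = g₁ * t₀ + g₀` with `g₀, g₁`
square-free in the remaining variables. If `g₁ ≠ 0`, then `deg g₁ ≤ d - 1`, and over every torus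
point where `g₁ ≠ 0` at least `q - 2` values `t₀ ≠ 0` avoid the root of `g₁ * t₀ + g₀`. If
`g₁ = 0`, every torus point where `g₀ ≠ 0` extends by all `q - 1` nonzero values of `t₀`.
Since `(q - 2) ^ e * (q - 1) ^ (s - e)` decreases in `e`, the degree drop only helps.
-/

open MvPolynomial

/-- A polynomial is square-free if every variable occurs in each of its monomials
with exponent at most 1. -/
def MvPolynomial.IsSquareFreePoly {σ R : Type*} [CommSemiring R]
    (p : MvPolynomial σ R) : Prop :=
  ∀ m ∈ p.support, ∀ i, m i ≤ 1

open Finset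

section AffineTorus

variable (σ F : Type*) [Fintype σ] [DecidableEq σ] [Zero F] [Fintype F] [DecidableEq F]

def affineTorus : Finset (σ → F) :=
  Fintype.piFinset fun _ => {0}ᶜ

variable {σ F}

@[simp]
lemma mem_affineTorus {x : σ → F} : x ∈ affineTorus σ F ↔ ∀ i, x i ≠ 0 := by
  simp [affineTorus]

lemma card_affineTorus : #(affineTorus σ F) = (Fintype.card F - 1) ^ Fintype.card σ := by
  simp [affineTorus, card_compl]

lemma Fin.cons_mem_affineTorus {n : ℕ} {x₀ : F} {xs : Fin n → F} :
    Fin.cons x₀ xs ∈ affineTorus (Fin (n + 1)) F ↔ x₀ ≠ 0 ∧ xs ∈ affineTorus (Fin n) F := by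
  simp [Fin.forall_fin_succ]

end AffineTorus

lemma Finset.card_mul_le_card_of_cons_mem {α : Type*} [Fintype α] [DecidableEq α] {n k : ℕ}
    {S : Finset (Fin n → α)} {T : Finset (Fin (n + 1) → α)}
    (hk : ∀ xs ∈ S, k ≤ #{x₀ | Fin.cons x₀ xs ∈ T}) : #S * k ≤ #T :=
  calc #S * k = ∑ _xs ∈ S, k := by rw [sum_const, smul_eq_mul]
    _ ≤ ∑ xs ∈ S, #{x₀ | Fin.cons x₀ xs ∈ T} := sum_le_sum hk
    _ = #(S.sigma fun xs => {x₀ | Fin.cons x₀ xs ∈ T}) := (card_sigma _ _).symm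
    _ ≤ #T := by
      refine card_le_card_of_injOn (fun p => Fin.cons p.2 p.1) (fun p hp => ?_) ?_
      · simpa using (mem_sigma.mp hp).2
      · rintro ⟨xs, x₀⟩ - ⟨ys, y₀⟩ - h
        obtain ⟨rfl, rfl⟩ := Fin.cons_inj.mp h
        rfl

lemma sub_two_le_card_filter_ne_zero_and_mul_add_ne_zero {F : Type*} [Field F] [Fintype F]
    [DecidableEq F] {a : F} (ha : a ≠ 0) (b : F) :
    Fintype.card F - 2 ≤ #{x : F | x ≠ 0 ∧ a * x + b ≠ 0} := by
  have hroot : ({x | x ≠ 0 ∧ a * x + b ≠ 0} : Finset F) = {0, -b / a}ᶜ := by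
    ext x
    simp only [mem_filter, mem_univ, true_and, mem_compl, mem_insert, mem_singleton, not_or]
    rw [eq_div_iff ha, mul_comm, ← add_eq_zero_iff_eq_neg]
  rw [hroot, card_compl]
  have := card_insert_le (0 : F) {-b / a}
  rw [card_singleton] at this
  omega

lemma pow_mul_pow_sub_le_pow_mul_pow_sub {a b e e' m : ℕ} (hab : a ≤ b) (he : e ≤ e')
    (hm : e' ≤ m) : a ^ e' * b ^ (m - e') ≤ a ^ e * b ^ (m - e) :=
  calc a ^ e' * b ^ (m - e') = a ^ e * (a ^ (e' - e) * b ^ (m - e')) := by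
        rw [← mul_assoc, ← pow_add, Nat.add_sub_cancel' he]
    _ ≤ a ^ e * (b ^ (e' - e) * b ^ (m - e')) := by gcongr
    _ = a ^ e * b ^ (m - e) := by rw [← pow_add]; congr 2; omega

namespace MvPolynomial.IsSquareFreePoly

variable {R : Type*} [CommSemiring R]

lemma totalDegree_le {σ : Type*} [Fintype σ] {p : MvPolynomial σ R} (hp : p.IsSquareFreePoly) :
    p.totalDegree ≤ Fintype.card σ := by
  refine Finset.sup_le fun m hm => ?_
  calc m.sum (fun _ e => e) = ∑ i ∈ m.support, m i := rfl
    _ ≤ ∑ _i ∈ m.support, 1 := sum_le_sum fun i _ => hp m hm i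
    _ ≤ Fintype.card σ := by simpa using card_le_univ m.support

variable {n : ℕ} {p : MvPolynomial (Fin (n + 1)) R}

lemma coeff_finSuccEquiv (hp : p.IsSquareFreePoly) (i : ℕ) :
    ((finSuccEquiv R n p).coeff i).IsSquareFreePoly := fun m hm j => by
  simpa using hp _ (mem_support_coeff_finSuccEquiv.mp hm) j.succ

lemma natDegree_finSuccEquiv_le_one (hp : p.IsSquareFreePoly) :
    (finSuccEquiv R n p).natDegree ≤ 1 := by
  rw [natDegree_finSuccEquiv, degreeOf_le_iff]
  exact fun m hm => hp m hm 0

end MvPolynomial.IsSquareFreePoly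

lemma MvPolynomial.eval_cons_of_natDegree_finSuccEquiv_le_one {R : Type*} [CommSemiring R]
    {n : ℕ} {p : MvPolynomial (Fin (n + 1)) R} (hp : (finSuccEquiv R n p).natDegree ≤ 1)
    (x₀ : R) (xs : Fin n → R) :
    eval (Fin.cons x₀ xs) p =
      eval xs ((finSuccEquiv R n p).coeff 1) * x₀ + eval xs ((finSuccEquiv R n p).coeff 0) := by
  rw [eval_eq_eval_mv_eval', Polynomial.eq_X_add_C_of_natDegree_le_one hp]
  simp

section Fibers

variable {F : Type*} [Field F] [Fintype F] [DecidableEq F] {n : ℕ}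
  {p : MvPolynomial (Fin (n + 1)) F}

lemma filter_cons_mem_filter_eval_ne_zero (hp : (finSuccEquiv F n p).natDegree ≤ 1)
    {xs : Fin n → F} (hxs : xs ∈ affineTorus (Fin n) F) :
    ({x₀ | Fin.cons x₀ xs ∈ ({x ∈ affineTorus _ F | eval x p ≠ 0} : Finset _)} : Finset F) =
      ({x₀ | x₀ ≠ 0 ∧ eval xs ((finSuccEquiv F n p).coeff 1) * x₀ +
        eval xs ((finSuccEquiv F n p).coeff 0) ≠ 0} : Finset F) := by
  ext x₀
  simp only [mem_filter, mem_univ, true_and, Fin.cons_mem_affineTorus, hxs, and_true,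
    eval_cons_of_natDegree_finSuccEquiv_le_one hp]

lemma card_filter_eval_coeff_one_ne_zero_mul_le (hp : (finSuccEquiv F n p).natDegree ≤ 1) :
    #{xs ∈ affineTorus (Fin n) F | eval xs ((finSuccEquiv F n p).coeff 1) ≠ 0} *
        (Fintype.card F - 2) ≤ #{x ∈ affineTorus _ F | eval x p ≠ 0} :=
  card_mul_le_card_of_cons_mem fun _ hxs => by
    rw [mem_filter] at hxs
    rw [filter_cons_mem_filter_eval_ne_zero hp hxs.1]
    exact sub_two_le_card_filter_ne_zero_and_mul_add_ne_zero hxs.2 _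

lemma card_filter_eval_coeff_zero_ne_zero_mul_le (hp : (finSuccEquiv F n p).natDegree ≤ 1)
    (hp₁ : (finSuccEquiv F n p).coeff 1 = 0) :
    #{xs ∈ affineTorus (Fin n) F | eval xs ((finSuccEquiv F n p).coeff 0) ≠ 0} *
        (Fintype.card F - 1) ≤ #{x ∈ affineTorus _ F | eval x p ≠ 0} :=
  card_mul_le_card_of_cons_mem fun _ hxs => by
    rw [mem_filter] at hxs
    rw [filter_cons_mem_filter_eval_ne_zero hp hxs.1]
    simp [hp₁, hxs.2, filter_ne', card_erase_of_mem]

end Fibers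

theorem MvPolynomial.IsSquareFreePoly.le_card_filter_eval_ne_zero {F : Type*} [Field F]
    [Fintype F] [DecidableEq F] {n : ℕ} {p : MvPolynomial (Fin n) F} (hp₀ : p ≠ 0)
    (hp : p.IsSquareFreePoly) :
    (Fintype.card F - 2) ^ p.totalDegree * (Fintype.card F - 1) ^ (n - p.totalDegree) ≤
      #{x ∈ affineTorus (Fin n) F | eval x p ≠ 0} := by
  induction n with
  | zero =>
    obtain ⟨c, rfl⟩ := C_surjective (Fin 0) p
    rw [Ne, C_eq_zero] at hp₀
    simp [Finset.Nonempty, hp₀]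
  | succ n ih =>
    set q := Fintype.card F
    set p₁ := (finSuccEquiv F n p).coeff 1
    set p₀ := (finSuccEquiv F n p).coeff 0
    have hdeg := hp.natDegree_finSuccEquiv_le_one
    have hp_le : p.totalDegree ≤ n + 1 := by simpa using hp.totalDegree_le
    by_cases hp₁ : p₁ = 0
    · have hp₀₀ : p₀ ≠ 0 := by
        contrapose! hp₀
        apply (finSuccEquiv F n).injective
        rw [map_zero, Polynomial.eq_X_add_C_of_natDegree_le_one hdeg]
        simp [p₁, p₀, hp₁, hp₀]
      have hdeg₀ : p₀.totalDegree ≤ p.totalDegree := by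
        simpa using totalDegree_coeff_finSuccEquiv_add_le p 0 hp₀₀
      have hdeg₀' : p₀.totalDegree ≤ n := by simpa using (hp.coeff_finSuccEquiv 0).totalDegree_le
      calc (q - 2) ^ p.totalDegree * (q - 1) ^ (n + 1 - p.totalDegree)
          ≤ (q - 2) ^ p₀.totalDegree * (q - 1) ^ (n + 1 - p₀.totalDegree) :=
            pow_mul_pow_sub_le_pow_mul_pow_sub (by omega) hdeg₀ hp_le
        _ = (q - 2) ^ p₀.totalDegree * (q - 1) ^ (n - p₀.totalDegree) * (q - 1) := by
            rw [Nat.sub_add_comm hdeg₀', pow_succ, mul_assoc]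
        _ ≤ _ := (Nat.mul_le_mul_right _ (ih hp₀₀ (hp.coeff_finSuccEquiv 0))).trans
            (card_filter_eval_coeff_zero_ne_zero_mul_le hdeg hp₁)
    · have hdeg₁ : p₁.totalDegree + 1 ≤ p.totalDegree :=
        totalDegree_coeff_finSuccEquiv_add_le p 1 hp₁
      calc (q - 2) ^ p.totalDegree * (q - 1) ^ (n + 1 - p.totalDegree)
          ≤ (q - 2) ^ (p₁.totalDegree + 1) * (q - 1) ^ (n + 1 - (p₁.totalDegree + 1)) :=
            pow_mul_pow_sub_le_pow_mul_pow_sub (by omega) hdeg₁ hp_le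
        _ = (q - 2) ^ p₁.totalDegree * (q - 1) ^ (n - p₁.totalDegree) * (q - 2) := by
            rw [Nat.add_sub_add_right, pow_succ]; ring
        _ ≤ _ := (Nat.mul_le_mul_right _ (ih hp₁ (hp.coeff_finSuccEquiv 1))).trans
            (card_filter_eval_coeff_one_ne_zero_mul_le hdeg)

theorem zeroes_in_torus_of_squarefree_general
    {F : Type*} [Field F] [Fintype F] {q s d : ℕ} (hq : Fintype.card F = q)
    (g : MvPolynomial (Fin s) F) (hg : g ≠ 0)
    (hsf : g.IsSquareFreePoly) (hdeg : g.totalDegree = d) :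
    Set.ncard {x : Fin s → F | (∀ i, x i ≠ 0) ∧ eval x g = 0} ≤
      (q - 1) ^ s - (q - 2) ^ d * (q - 1) ^ (s - d) := by
  classical
  subst hq hdeg
  have hzeroes : {x : Fin s → F | (∀ i, x i ≠ 0) ∧ eval x g = 0} =
      ↑({x ∈ affineTorus (Fin s) F | eval x g = 0} : Finset _) := by
    ext x
    simp
  have hsplit : #{x ∈ affineTorus (Fin s) F | eval x g = 0} +
      #{x ∈ affineTorus (Fin s) F | eval x g ≠ 0} = (Fintype.card F - 1) ^ s := by
    rw [card_filter_add_card_filter_not, card_affineTorus, Fintype.card_fin]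
  rw [hzeroes, Set.ncard_coe_finset]
  have := hsf.le_card_filter_eval_ne_zero hg
  omega

theorem zeroes_in_torus_of_squarefree
    {F : Type*} [Field F] [Fintype F] {q s d : ℕ} (hq : Fintype.card F = q)
    (hs : 2 ≤ s) (hd1 : 1 ≤ d) (hds : d ≤ s)
    (g : MvPolynomial (Fin s) F) (hg : g ≠ 0)
    (hsf : g.IsSquareFreePoly) (hdeg : g.totalDegree = d) :
    Set.ncard {x : Fin s → F | (∀ i, x i ≠ 0) ∧ eval x g = 0} ≤
      (q - 1) ^ s - (q - 2) ^ d * (q - 1) ^ (s - d) :=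
  zeroes_in_torus_of_squarefree_general hq g hg hsf hdeg
end

section
/- Let q ≥ 3, s ≥ 2, 1 ≤ d ≤ s, 1 ≤ r ≤ C(s,d), and d + r - 2 < s. Consider the polynomials g_i = (t_1 - t_2)(t_3 - t_4)···(t_{2d-3} - t_{2d-2})(t_{2d+i-2} - t_{2d+i-1}) for 1 ≤ i ≤ r (requiring 2d + r - 2 < s so these are defined). Then the number of common zeroes of g_1,...,g_r in the torus T = (F_q^*)^s equals (q-1)^s - (q-1)^{s-d-r+1}(q-2)^{d-1}[(q-1)^r - 1]. -/
/-!
A point of the torus fails to be a common zero exactly when all the pair differences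
`t_{2j} - t_{2j+1}` are nonzero and the chain `t_{2d-2}, …, t_{2d+r-2}` is not constant. Dividing
each `t_{2j+1}` by `t_{2j}`, and each later chain coordinate by `t_{2d-2}`, is a bijection of the
torus `(F^*)^s` which turns these into conditions on single coordinates: `d - 1` coordinates are
`≠ 1`, and `r` coordinates are not all `= 1`. Hence exactly
`(q-2)^(d-1) (q-1)^(s-d-r+1) ((q-1)^r - 1)` points of the torus are not common zeroes.
-/

open MvPolynomial Finset

theorem Fin.forall_castSucc_eq_succ_iff {α : Type*} {n : ℕ} {c : Fin (n + 1) → α} :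
    (∀ i : Fin n, c i.castSucc = c i.succ) ↔ ∀ i : Fin n, c i.succ = c 0 := by
  have hconst : (∀ k, c k = c 0) ↔ ∀ i : Fin n, c i.succ = c 0 := by
    simp [Fin.forall_fin_succ]
  rw [← hconst]
  refine ⟨fun h k => ?_, fun h i => by rw [h i.castSucc, h i.succ]⟩
  induction k using Fin.induction with
  | zero => rfl
  | succ i ih => rw [← h i, ih]

section Shear

variable {ι G : Type*} [DecidableEq ι] [Group G] (D : Finset ι) (b : ι → ι)

def shearEquiv (hb : ∀ i ∈ D, b i ∉ D) : (ι → G) ≃ (ι → G) where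
  toFun x i := if i ∈ D then (x (b i))⁻¹ * x i else x i
  invFun y i := if i ∈ D then y (b i) * y i else y i
  left_inv x := funext fun i => by by_cases hi : i ∈ D <;> simp [hi, hb i]
  right_inv y := funext fun i => by by_cases hi : i ∈ D <;> simp [hi, hb i]

variable {D b}

lemma shearEquiv_apply_eq_one_iff (hb : ∀ i ∈ D, b i ∉ D) {x : ι → G} {i : ι}
    (hi : i ∈ D) : shearEquiv D b hb x i = 1 ↔ x i = x (b i) := by
  simp [shearEquiv, hi, inv_mul_eq_one, eq_comm]

end Shear

section Count

variable {ι α : Type*} [Finite ι] [Finite α] {A B : Finset ι}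

lemma ncard_forall_ne_and_forall_eq (hAB : Disjoint A B) (a : α) :
    {y : ι → α | (∀ i ∈ A, y i ≠ a) ∧ ∀ i ∈ B, y i = a}.ncard =
      (Nat.card α - 1) ^ #A * Nat.card α ^ (Nat.card ι - #A - #B) := by
  classical
  have := Fintype.ofFinite ι
  have := Fintype.ofFinite α
  let t : ι → Finset α := fun i => if i ∈ A then {a}ᶜ else if i ∈ B then {a} else univ
  have hset :
      {y : ι → α | (∀ i ∈ A, y i ≠ a) ∧ ∀ i ∈ B, y i = a} = Fintype.piFinset t := by
    ext y
    simp only [Set.mem_ofPred_eq, mem_coe, Fintype.mem_piFinset, t]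
    refine ⟨fun h i => ?_, fun h => ⟨fun i hi => ?_, fun i hi => ?_⟩⟩
    · by_cases hA : i ∈ A
      · simpa [hA] using h.1 i hA
      · by_cases hB : i ∈ B <;> simp [hA, hB, h.2 i]
    · simpa [hi] using h i
    · simpa [hi, disjoint_right.1 hAB hi] using h i
  have hcard (i : ι) :
      #(t i) = if i ∈ A then Nat.card α - 1 else if i ∈ B then 1 else Nat.card α := by
    simp only [t]
    split_ifs <;> simp [card_compl, Nat.card_eq_fintype_card]
  have hrest : ({i ∈ {i | i ∉ A} | i ∉ B} : Finset ι) = (A ∪ B)ᶜ := by ext; simp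
  rw [hset, Set.ncard_coe_finset, Fintype.card_piFinset, prod_congr rfl fun i _ => hcard i,
    prod_ite, prod_ite, filter_mem_eq_inter, univ_inter, hrest, prod_const_one, one_mul,
    prod_const, prod_const, card_compl, card_union_of_disjoint hAB,
    Nat.card_eq_fintype_card (α := ι), Nat.sub_sub]

lemma ncard_forall_ne_and_exists_ne (hAB : Disjoint A B) (a : α) :
    {y : ι → α | (∀ i ∈ A, y i ≠ a) ∧ ∃ i ∈ B, y i ≠ a}.ncard =
      (Nat.card α - 1) ^ #A * Nat.card α ^ (Nat.card ι - #A - #B) * (Nat.card α ^ #B - 1) := by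
  have hdiff : {y : ι → α | (∀ i ∈ A, y i ≠ a) ∧ ∃ i ∈ B, y i ≠ a} =
      {y | (∀ i ∈ A, y i ≠ a) ∧ ∀ i ∈ (∅ : Finset ι), y i = a} \
        {y | (∀ i ∈ A, y i ≠ a) ∧ ∀ i ∈ B, y i = a} := by
    ext y
    simp only [Set.mem_ofPred_eq, Set.mem_sdiff, notMem_empty, IsEmpty.forall_iff, implies_true,
      and_true, not_and, not_forall]
    tauto
  have hcard_le : #A + #B ≤ Nat.card ι := by
    classical
    have := Fintype.ofFinite ι
    rw [← card_union_of_disjoint hAB, Nat.card_eq_fintype_card]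
    exact card_le_univ _
  rw [hdiff, Set.ncard_sdiff (Set.ofPred_subset_ofPred.2 fun y hy => ⟨hy.1, by simp⟩),
    ncard_forall_ne_and_forall_eq hAB, ncard_forall_ne_and_forall_eq (disjoint_empty_right A),
    card_empty, Nat.sub_zero,
    Nat.mul_sub, mul_one, mul_assoc, ← pow_add, Nat.sub_add_cancel (by omega)]

lemma ncard_forall_ne_base_and_exists_ne_base {G : Type*} [Group G] [Finite G]
    [DecidableEq ι] {b : ι → ι} (hAB : Disjoint A B) (hb : ∀ i ∈ A ∪ B, b i ∉ A ∪ B) :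
    {x : ι → G | (∀ i ∈ A, x i ≠ x (b i)) ∧ ∃ i ∈ B, x i ≠ x (b i)}.ncard =
      (Nat.card G - 1) ^ #A * Nat.card G ^ (Nat.card ι - #A - #B) * (Nat.card G ^ #B - 1) := by
  have hpre : {x : ι → G | (∀ i ∈ A, x i ≠ x (b i)) ∧ ∃ i ∈ B, x i ≠ x (b i)} =
      shearEquiv (A ∪ B) b hb ⁻¹' {y | (∀ i ∈ A, y i ≠ 1) ∧ ∃ i ∈ B, y i ≠ 1} := by
    ext x
    exact and_congr
      (forall₂_congr fun i hi =>
        (shearEquiv_apply_eq_one_iff hb (mem_union_left B hi)).not.symm)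
      (exists_congr fun i => and_congr_right fun hi =>
        (shearEquiv_apply_eq_one_iff hb (mem_union_right A hi)).not.symm)
  rw [hpre, Set.ncard_preimage_of_injective_subset_range (shearEquiv _ _ hb).injective
    (by simp), ncard_forall_ne_and_exists_ne hAB]

end Count

lemma Set.ncard_setOf_forall_ne_zero_and {ι M₀ : Type*} [GroupWithZero M₀]
    (P : (ι → M₀) → Prop) :
    {x : ι → M₀ | (∀ i, x i ≠ 0) ∧ P x}.ncard = {u : ι → M₀ˣ | P fun i => u i}.ncard := by
  have himage : {x : ι → M₀ | (∀ i, x i ≠ 0) ∧ P x} =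
      (fun u i => (u i : M₀)) '' {u : ι → M₀ˣ | P fun i => u i} := by
    ext x
    refine ⟨fun ⟨hx, hP⟩ => ⟨fun i => Units.mk0 (x i) (hx i), hP, rfl⟩, ?_⟩
    rintro ⟨u, hP, rfl⟩
    exact ⟨fun i => (u i).ne_zero, hP⟩
  rw [himage, Set.ncard_image_of_injective _
    fun u v huv => funext fun i => Units.ext (congrFun huv i)]

/-- The coordinate that the shear divides by: `2j` for `2j + 1 < 2d - 2`, and the start `2d - 2`
of the chain for the chain coordinates (values elsewhere play no role). -/
def pairChainBase (d : ℕ) {s : ℕ} (i : Fin s) : Fin s :=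
  ⟨if (i : ℕ) < 2 * d - 2 then i - 1 else 2 * d - 2, by have := i.2; split_ifs <;> omega⟩

lemma pairChainBase_two_mul_add_one {s d j : ℕ} (hj : j < d - 1) (hs : 2 * j + 1 < s) :
    pairChainBase d ⟨2 * j + 1, hs⟩ = ⟨2 * j, by omega⟩ := by
  ext; simp only [pairChainBase]; split_ifs <;> omega

lemma pairChainBase_chain {s d k : ℕ} (hk : 2 * d + k - 1 < s) :
    pairChainBase d ⟨2 * d + k - 1, hk⟩ = ⟨2 * d - 2, by omega⟩ := by
  ext; simp only [pairChainBase]; split_ifs <;> omega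

lemma ncard_pairs_ne_and_exists_chain_ne {G : Type*} [Group G] [Finite G] {s d r : ℕ}
    (hd : 1 ≤ d) (h : 2 * d + r < s + 2) :
    {x : Fin s → G | (∀ j : Fin (d - 1), x ⟨2 * j, by omega⟩ ≠ x ⟨2 * j + 1, by omega⟩) ∧
      ∃ i : Fin r, x ⟨2 * d + i - 2, by omega⟩ ≠ x ⟨2 * d + i - 1, by omega⟩}.ncard =
      (Nat.card G - 1) ^ (d - 1) * Nat.card G ^ (s - (d - 1) - r) * (Nat.card G ^ r - 1) := by
  let A : Finset (Fin s) := univ.image fun j : Fin (d - 1) => ⟨2 * j + 1, by omega⟩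
  let B : Finset (Fin s) := univ.image fun i : Fin r => ⟨2 * d + i - 1, by omega⟩
  have hAB : Disjoint A B := by
    simp only [A, B, disjoint_left, mem_image, mem_univ, true_and]
    rintro _ ⟨j, rfl⟩ ⟨i, hi⟩
    simp only [Fin.ext_iff] at hi
    omega
  have hb : ∀ i ∈ A ∪ B, pairChainBase d i ∉ A ∪ B := by
    simp only [A, B, mem_union, mem_image, mem_univ, true_and, pairChainBase, Fin.ext_iff]
    rintro i (⟨j, hj⟩ | ⟨k, hk⟩) (⟨a, ha⟩ | ⟨a, ha⟩) <;> split_ifs at ha <;> omega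
  have hchain (x : Fin s → G) :
      (∃ i : Fin r, x ⟨2 * d + i - 2, by omega⟩ ≠ x ⟨2 * d + i - 1, by omega⟩) ↔
        ∃ i : Fin r, x ⟨2 * d + i - 1, by omega⟩ ≠ x ⟨2 * d - 2, by omega⟩ := by
    have := Fin.forall_castSucc_eq_succ_iff
      (c := fun k : Fin (r + 1) => x ⟨2 * d - 2 + k, by omega⟩)
    rw [← not_iff_not]
    simp only [not_exists, not_not]
    convert this using 5 <;> simp only [Fin.val_castSucc, Fin.val_succ, Fin.val_zero] <;> omega
  have hset :
      {x : Fin s → G | (∀ j : Fin (d - 1), x ⟨2 * j, by omega⟩ ≠ x ⟨2 * j + 1, by omega⟩) ∧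
      ∃ i : Fin r, x ⟨2 * d + i - 2, by omega⟩ ≠ x ⟨2 * d + i - 1, by omega⟩} =
      {x | (∀ i ∈ A, x i ≠ x (pairChainBase d i)) ∧ ∃ i ∈ B, x i ≠ x (pairChainBase d i)} := by
    ext x
    simp only [Set.mem_ofPred_eq, A, B, mem_image, mem_univ, true_and, forall_exists_index,
      forall_apply_eq_imp_iff, exists_exists_eq_and, Fin.is_lt, pairChainBase_two_mul_add_one,
      pairChainBase_chain, hchain]
    exact and_congr (forall_congr' fun _ => ne_comm) Iff.rfl
  have hA : #A = d - 1 := by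
    rw [card_image_of_injective _ fun j k hjk => by simp only [Fin.mk.injEq] at hjk; omega,
      card_univ, Fintype.card_fin]
  have hB : #B = r := by
    rw [card_image_of_injective _ fun j k hjk => by simp only [Fin.mk.injEq] at hjk; omega,
      card_univ, Fintype.card_fin]
  rw [hset, ncard_forall_ne_base_and_exists_ne_base hAB hb, Nat.card_fin, hA, hB]

theorem common_zeroes_of_explicit_binomial_products
    {F : Type*} [Field F] [Fintype F] {q s d r : ℕ} (hq : Fintype.card F = q)
    (hd1 : 1 ≤ d)
    (h2dr : 2 * d + r < s + 2)
    (g : Fin r → MvPolynomial (Fin s) F)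
    (hg : ∀ i : Fin r, g i =
      (∏ j : Fin (d - 1),
          (X (⟨2 * (j : ℕ), by have := j.2; omega⟩ : Fin s) -
            X (⟨2 * (j : ℕ) + 1, by have := j.2; omega⟩ : Fin s))) *
        (X (⟨2 * d + (i : ℕ) - 2, by have := i.2; omega⟩ : Fin s) -
          X (⟨2 * d + (i : ℕ) - 1, by have := i.2; omega⟩ : Fin s))) :
    Set.ncard {x : Fin s → F | (∀ i, x i ≠ 0) ∧ ∀ i : Fin r, eval x (g i) = 0} =
      (q - 1) ^ s - (q - 1) ^ (s - d - r + 1) * (q - 2) ^ (d - 1) * ((q - 1) ^ r - 1) := by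
  have hunits : Nat.card Fˣ = q - 1 := by rw [Nat.card_units, Nat.card_eq_fintype_card, hq]
  have hnonvanishing (u : Fin s → Fˣ) : (¬ ∀ i, eval (fun k => (u k : F)) (g i) = 0) ↔
      (∀ j : Fin (d - 1), u ⟨2 * j, by omega⟩ ≠ u ⟨2 * j + 1, by omega⟩) ∧
        ∃ i : Fin r, u ⟨2 * d + i - 2, by omega⟩ ≠ u ⟨2 * d + i - 1, by omega⟩ := by
    simp only [not_forall, hg, map_mul, map_prod, map_sub, eval_X, ← ne_eq, mul_ne_zero_iff,
      prod_ne_zero_iff, sub_ne_zero, Units.val_injective.ne_iff, mem_univ, true_implies,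
      exists_and_left]
  calc _ = {u : Fin s → Fˣ | ∀ i, eval (fun k => (u k : F)) (g i) = 0}.ncard :=
        Set.ncard_setOf_forall_ne_zero_and _
    _ = Nat.card (Fin s → Fˣ) -
          {u : Fin s → Fˣ | ¬ ∀ i, eval (fun k => (u k : F)) (g i) = 0}.ncard := by
        rw [← Set.ncard_compl, Set.compl_ofPred]; simp only [not_not]
    _ = (q - 1) ^ s - (q - 2) ^ (d - 1) * (q - 1) ^ (s - (d - 1) - r) * ((q - 1) ^ r - 1) := by
        simp only [hnonvanishing]
        rw [ncard_pairs_ne_and_exists_chain_ne hd1 h2dr, Nat.card_fun, Nat.card_fin, hunits,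
          Nat.sub_sub]
    _ = _ := by rw [show s - (d - 1) - r = s - d - r + 1 by omega, mul_comm ((q - 2) ^ (d - 1))]
end

section
/- Let Δ be the set of 0-1 vectors in {0,...,q-2}^s with coordinate sum d, let \hat{b} be obtained from b by replacing each nonzero coordinate b_i by q-1-b_i, let G = {\hat{b} : b ∈ Δ}, and Δ' = {0,...,q-2}^s \ G. Let C_Δ and C_{Δ'} be the images of the spans of the corresponding monomials under evaluation at all points of T = (F_q^*)^s. Then C_{Δ'} is the Euclidean dual of C_Δ, i.e., C_{Δ'} = C_Δ^⊥. -/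
/-- The evaluation vector on the affine torus `(Fˣ)^s` of the monomial with
exponent vector `b`. -/
def torusEvalVec (F : Type*) [Field F] (s : ℕ) (b : Fin s → ℕ) : (Fin s → Fˣ) → F :=
  fun x => ∏ j, ((x j : F)) ^ (b j)

/-- The set `Δ` of 0-1 exponent vectors with coordinate sum `d`. -/
def deltaSet (s d : ℕ) : Set (Fin s → ℕ) := {b | (∀ i, b i ≤ 1) ∧ ∑ i, b i = d}

/-- The "hat" operation replacing each nonzero coordinate `bᵢ` by `q - 1 - bᵢ`. -/
def hatVec (q : ℕ) {s : ℕ} (b : Fin s → ℕ) : Fin s → ℕ :=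
  fun i => if b i = 0 then 0 else q - 1 - b i

/-- The complementary set `Δ' = {0,…,q-2}^s \ {b̂ : b ∈ Δ}`. -/
def deltaPrimeSet (q s d : ℕ) : Set (Fin s → ℕ) :=
  {a | ∀ i, a i ≤ q - 2} \ (hatVec q '' deltaSet s d)

/-- The linear code spanned by the torus evaluation vectors of the monomials with
exponent vectors in `E`. -/
noncomputable def torusCode (F : Type*) [Field F] (s : ℕ) (E : Set (Fin s → ℕ)) :
    Submodule F ((Fin s → Fˣ) → F) :=
  Submodule.span F (torusEvalVec F s '' E)

section Aux

variable {F : Type*} [Field F] [Fintype F] [DecidableEq F] {q s : ℕ}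

lemma torus_sum_pow (hq : Fintype.card F = q) (k : ℕ) :
    ∑ t : Fˣ, (t : F) ^ k = if q - 1 ∣ k then (-1 : F) else 0 := by
  subst hq
  simpa [Units.val_pow_eq_pow_val] using FiniteField.sum_pow_units F k

lemma torus_gram (hq : Fintype.card F = q) (a b : Fin s → ℕ) :
    ∑ x : Fin s → Fˣ, torusEvalVec F s a x * torusEvalVec F s b x
      = if ∀ j, q - 1 ∣ a j + b j then (-1 : F) ^ s else 0 := by
  classical
  have h1 : ∀ x : Fin s → Fˣ,
      torusEvalVec F s a x * torusEvalVec F s b x = ∏ j, ((x j : F)) ^ (a j + b j) := by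
    intro x
    simp [torusEvalVec, ← Finset.prod_mul_distrib, pow_add]
  calc ∑ x : Fin s → Fˣ, torusEvalVec F s a x * torusEvalVec F s b x
      = ∑ x : Fin s → Fˣ, ∏ j, ((x j : F)) ^ (a j + b j) := by simp_rw [h1]
    _ = ∏ j, ∑ t : Fˣ, (t : F) ^ (a j + b j) :=
        (Fintype.prod_sum fun j (t : Fˣ) => (t : F) ^ (a j + b j)).symm
    _ = ∏ j, (if q - 1 ∣ a j + b j then (-1 : F) else 0) := by
        simp_rw [torus_sum_pow hq]
    _ = if ∀ j, q - 1 ∣ a j + b j then (-1 : F) ^ s else 0 := by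
        by_cases h : ∀ j, q - 1 ∣ a j + b j
        · rw [if_pos h, Finset.prod_congr rfl (fun j _ => if_pos (h j))]
          simp
        · rw [if_neg h]
          push_neg at h
          obtain ⟨j, hj⟩ := h
          exact Finset.prod_eq_zero (Finset.mem_univ j) (if_neg hj)

lemma hat_cond (hq3 : 3 ≤ q) {a b : ℕ} (ha : a ≤ q - 2) (hb : b ≤ q - 2) :
    q - 1 ∣ a + b ↔ b = (if a = 0 then 0 else q - 1 - a) := by
  constructor
  · rintro ⟨c, hc⟩
    have hc1 : c ≤ 1 := by
      by_contra hcon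
      have : (q - 1) * 2 ≤ (q - 1) * c := Nat.mul_le_mul_left _ (by omega)
      omega
    interval_cases c <;> split_ifs <;> omega
  · intro h
    split_ifs at h with h0
    · exact ⟨0, by omega⟩
    · exact ⟨1, by omega⟩

lemma hatVec_le (hq3 : 3 ≤ q) {a : Fin s → ℕ} (ha : ∀ j, a j ≤ q - 2) (j : Fin s) :
    hatVec q a j ≤ q - 2 := by
  have := ha j
  simp only [hatVec]
  split_ifs with h <;> omega

lemma hatVec_hatVec (hq3 : 3 ≤ q) {a : Fin s → ℕ} (ha : ∀ j, a j ≤ q - 2) :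
    hatVec q (hatVec q a) = a := by
  funext j
  have := ha j
  simp only [hatVec]
  split_ifs <;> omega

lemma torus_gram' (hq : Fintype.card F = q) (hq3 : 3 ≤ q) {a b : Fin s → ℕ}
    (ha : ∀ j, a j ≤ q - 2) (hb : ∀ j, b j ≤ q - 2) :
    ∑ x : Fin s → Fˣ, torusEvalVec F s a x * torusEvalVec F s b x
      = if b = hatVec q a then (-1 : F) ^ s else 0 := by
  classical
  rw [torus_gram hq a b]
  have hiff : (∀ j, q - 1 ∣ a j + b j) ↔ b = hatVec q a := by
    constructor
    · intro h
      funext j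
      simpa only [hatVec] using (hat_cond hq3 (ha j) (hb j)).1 (h j)
    · intro h j
      exact (hat_cond hq3 (ha j) (hb j)).2 (by simpa only [hatVec] using congrFun h j)
  simp only [hiff]

/-- The pairing against a fixed vector, as a linear map. -/
noncomputable def pairMap {F : Type*} [Field F] {s : ℕ} [Fintype F] [DecidableEq F]
    (v : (Fin s → Fˣ) → F) : ((Fin s → Fˣ) → F) →ₗ[F] F where
  toFun u := ∑ x : Fin s → Fˣ, v x * u x
  map_add' u u' := by simp [mul_add, Finset.sum_add_distrib]
  map_smul' r u := by
    simp only [Pi.smul_apply, smul_eq_mul, RingHom.id_apply, Finset.mul_sum]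
    exact Finset.sum_congr rfl fun x _ => by ring

end Aux

theorem dual_of_toric_code_over_hypersimplex
    {F : Type*} [Field F] [Fintype F] [DecidableEq F] {q s d : ℕ}
    (hq : Fintype.card F = q) (hq3 : 3 ≤ q) (hs : 2 ≤ s) (hd1 : 1 ≤ d) (hds : d ≤ s) :
    ∀ v : (Fin s → Fˣ) → F,
      v ∈ torusCode F s (deltaPrimeSet q s d) ↔
        ∀ c ∈ torusCode F s (deltaSet s d), ∑ x : Fin s → Fˣ, v x * c x = 0 := by
  classical
  intro v
  have hΔle : ∀ b ∈ deltaSet s d, ∀ j, b j ≤ q - 2 := by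
    rintro b ⟨hb1, -⟩ j
    have := hb1 j
    omega
  have hΔ'le : ∀ a ∈ deltaPrimeSet q s d, ∀ j, a j ≤ q - 2 := by
    rintro a ⟨ha, -⟩ j
    exact ha j
  have keygen : ∀ a ∈ deltaPrimeSet q s d, ∀ b ∈ deltaSet s d,
      ∑ x : Fin s → Fˣ, torusEvalVec F s a x * torusEvalVec F s b x = 0 := by
    intro a ha b hb
    rw [torus_gram' hq hq3 (hΔ'le a ha) (hΔle b hb), if_neg]
    intro hcon
    exact ha.2 ⟨b, hb, by rw [hcon, hatVec_hatVec hq3 (hΔ'le a ha)]⟩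
  constructor
  · -- easy direction
    intro hv c hc
    have hC : torusCode F s (deltaSet s d) ≤ LinearMap.ker (pairMap v) := by
      rw [torusCode, Submodule.span_le]
      rintro _ ⟨b, hb, rfl⟩
      simp only [SetLike.mem_coe, LinearMap.mem_ker]
      have hflip : pairMap v (torusEvalVec F s b)
          = pairMap (torusEvalVec F s b) v := by
        simp only [pairMap, LinearMap.coe_mk, AddHom.coe_mk]
        exact Finset.sum_congr rfl fun x _ => mul_comm _ _
      rw [hflip]
      have hD : torusCode F s (deltaPrimeSet q s d)
          ≤ LinearMap.ker (pairMap (torusEvalVec F s b)) := by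
        rw [torusCode, Submodule.span_le]
        rintro _ ⟨a, ha, rfl⟩
        simp only [SetLike.mem_coe, LinearMap.mem_ker, pairMap, LinearMap.coe_mk,
          AddHom.coe_mk]
        calc ∑ x : Fin s → Fˣ, torusEvalVec F s b x * torusEvalVec F s a x
            = ∑ x : Fin s → Fˣ, torusEvalVec F s a x * torusEvalVec F s b x :=
              Finset.sum_congr rfl fun x _ => mul_comm _ _
          _ = 0 := keygen a ha b hb
      exact hD hv
    simpa [pairMap, LinearMap.mem_ker] using hC hc
  · -- hard direction
    intro hv
    haveI : NeZero (q - 1) := ⟨by omega⟩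
    let ι := Fin s → Fin (q - 1)
    let vl : ι → Fin s → ℕ := fun k j => (k j : ℕ)
    let g : ι → (Fin s → Fˣ) → F := fun k => torusEvalVec F s (vl k)
    have hvl_le : ∀ (k : ι) (j : Fin s), vl k j ≤ q - 2 := by
      intro k j
      have := (k j).isLt
      simp only [vl]
      omega
    have hvl_inj : ∀ k k' : ι, vl k = vl k' → k = k' := by
      intro k k' h
      funext j
      exact Fin.val_injective (congrFun h j)
    let khat : ι → ι := fun k j => ⟨hatVec q (vl k) j, by
      have := hatVec_le hq3 (hvl_le k) j
      omega⟩
    have hvlkhat : ∀ k, vl (khat k) = hatVec q (vl k) := fun k => funext fun j => rfl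
    have hkhat : ∀ k, khat (khat k) = k := fun k => hvl_inj _ _ (by
      rw [hvlkhat, hvlkhat, hatVec_hatVec hq3 (hvl_le k)])
    -- bilinearity of the pairing with a sum
    have hsum : ∀ (cf : ι → F) (w : (Fin s → Fˣ) → F),
        ∑ x : Fin s → Fˣ, (∑ k, cf k • g k) x * w x
          = ∑ k, cf k * ∑ x : Fin s → Fˣ, g k x * w x := by
      intro cf w
      simp only [Finset.sum_apply, Pi.smul_apply, smul_eq_mul, Finset.sum_mul]
      rw [Finset.sum_comm]
      simp only [mul_assoc, ← Finset.mul_sum]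
    have hne : ((-1 : F) ^ s) ≠ 0 := pow_ne_zero _ (by norm_num)
    -- linear independence of the full family of monomial evaluation vectors
    have hli : LinearIndependent F g := by
      rw [Fintype.linearIndependent_iff]
      intro cf hcf k
      have h0 : ∑ x : Fin s → Fˣ, (∑ k', cf k' • g k') x * g (khat k) x = 0 := by
        rw [hcf]
        simp
      rw [hsum] at h0
      have hsimp : ∀ k' : ι, (∑ x : Fin s → Fˣ, g k' x * g (khat k) x)
          = if k' = k then (-1 : F) ^ s else 0 := by
        intro k'
        rw [show g k' = torusEvalVec F s (vl k') from rfl,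
          show g (khat k) = torusEvalVec F s (vl (khat k)) from rfl,
          torus_gram' hq hq3 (hvl_le k') (hvl_le (khat k))]
        by_cases h : k' = k
        · subst h
          rw [if_pos rfl, if_pos rfl]
        · rw [if_neg _, if_neg h]
          intro hcon
          apply h
          apply hvl_inj
          have := congrArg (hatVec q) hcon
          rw [hvlkhat, hatVec_hatVec hq3 (hvl_le k),
            hatVec_hatVec hq3 (hvl_le k')] at this
          exact this.symm
      simp only [hsimp, mul_ite, mul_zero] at h0
      rw [Finset.sum_ite_eq' Finset.univ k (fun k' => cf k' * (-1 : F) ^ s)] at h0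
      simp only [Finset.mem_univ, if_true] at h0
      exact (mul_eq_zero.1 h0).resolve_right hne
    have hcard : Fintype.card ι = Module.finrank F ((Fin s → Fˣ) → F) := by
      rw [Module.finrank_fintype_fun_eq_card]
      simp [ι, Fintype.card_fun, Fintype.card_units, hq]
    have hspan := hli.span_eq_top_of_card_eq_finrank hcard
    have hvmem : v ∈ Submodule.span F (Set.range g) := by
      rw [hspan]
      exact Submodule.mem_top
    obtain ⟨cf, hcf⟩ := (Submodule.mem_span_range_iff_exists_fun F).1 hvmem
    -- coefficients over the "hat" image of Δ vanish
    have hcoef : ∀ k : ι, vl k ∈ hatVec q '' deltaSet s d → cf k = 0 := by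
      rintro k ⟨b, hb, hkb⟩
      have h2 := hv _ (Submodule.subset_span ⟨b, hb, rfl⟩ :
        torusEvalVec F s b ∈ torusCode F s (deltaSet s d))
      rw [← hcf, hsum] at h2
      have hsimp : ∀ k' : ι, (∑ x : Fin s → Fˣ, g k' x * torusEvalVec F s b x)
          = if k' = k then (-1 : F) ^ s else 0 := by
        intro k'
        rw [show g k' = torusEvalVec F s (vl k') from rfl,
          torus_gram' hq hq3 (hvl_le k') (hΔle b hb)]
        by_cases h : k' = k
        · subst h
          rw [if_pos rfl, if_pos]
          rw [← hkb, hatVec_hatVec hq3 (hΔle b hb)]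
        · rw [if_neg _, if_neg h]
          intro hcon
          apply h
          apply hvl_inj
          rw [← hkb, hcon, hatVec_hatVec hq3 (hvl_le k')]
      simp only [hsimp, mul_ite, mul_zero] at h2
      rw [Finset.sum_ite_eq' Finset.univ k (fun k' => cf k' * (-1 : F) ^ s)] at h2
      simp only [Finset.mem_univ, if_true] at h2
      exact (mul_eq_zero.1 h2).resolve_right hne
    rw [← hcf]
    apply Submodule.sum_mem
    intro k _
    by_cases hk : vl k ∈ hatVec q '' deltaSet s d
    · rw [hcoef k hk, zero_smul]
      exact Submodule.zero_mem _
    · exact Submodule.smul_mem _ _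
        (Submodule.subset_span ⟨vl k, ⟨fun j => hvl_le k j, hk⟩, rfl⟩)
end
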